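/- The number of involutions of {1,...,n} avoiding both 3412 and 321 equals the Fibonacci number F_{n+1} (with F_1 = F_2 = 1). -/

import Mathlib

def Av3412 {n : ℕ} (σ : Equiv.Perm (Fin n)) : Prop :=
  ¬ ∃ i j k l : Fin n, i < j ∧ j < k ∧ k < l ∧ σ k < σ l ∧ σ l < σ i ∧ σ i < σ j

def Av321 {n : ℕ} (σ : Equiv.Perm (Fin n)) : Prop :=
  ¬ ∃ i j k : Fin n, i < j ∧ j < k ∧ σ k < σ j ∧ σ j < σ i

/-!
An involution avoiding `321` and `3412` moves every point by at most one: if `σ i ≥ i + 2`,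
then `σ (i + 1)` completes `i < i + 1 < σ i` to a `3412` (when it lies outside `[i, σ i]`) or to
a `321` (when it lies inside). Conversely, every such involution avoids both patterns. An
involution of `{0, …, n + 1}` moving points by at most one either fixes the last point or swaps
the last two, and deleting them leaves an involution of the same kind on `n + 1` resp. `n`
points, which gives the Fibonacci recursion.
-/

open Function

def MovesAtMostOne {n : ℕ} (f : Fin n → Fin n) : Prop :=
  ∀ i, (f i : ℕ) ≤ i + 1 ∧ (i : ℕ) ≤ f i + 1

section Avoidance

variable {n : ℕ} {σ : Equiv.Perm (Fin n)}

theorem apply_le_add_one_of_avoids (hσ : Involutive σ) (h3412 : Av3412 σ) (h321 : Av321 σ)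
    (i : Fin n) : (σ i : ℕ) ≤ i + 1 := by
  by_contra! hfar
  set k : Fin n := ⟨i + 1, by omega⟩
  have hik : i < k := Fin.lt_def.2 (Nat.lt_succ_self _)
  have hki : k < σ i := Fin.lt_def.2 hfar
  have hσk_ne_i : σ k ≠ i := fun h => hki.ne (by rw [← h, hσ])
  have hσk_ne_σi : σ k ≠ σ i := σ.injective.ne hik.ne'
  rcases hσk_ne_i.lt_or_gt with hσk_lt_i | hi_lt_σk
  · exact h3412 ⟨σ k, i, k, σ i, hσk_lt_i, hik, hki, by rwa [hσ], by rwa [hσ, hσ],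
      by rwa [hσ]⟩
  rcases hσk_ne_σi.lt_or_gt with hσk_lt_σi | hσi_lt_σk
  · exact h321 ⟨i, k, σ i, hik, hki, by rwa [hσ], hσk_lt_σi⟩
  · exact h3412 ⟨i, k, σ i, σ k, hik, hki, hσi_lt_σk, by rwa [hσ, hσ],
      by rwa [hσ], hσi_lt_σk⟩

theorem movesAtMostOne_of_avoids (hσ : Involutive σ) (h3412 : Av3412 σ) (h321 : Av321 σ) :
    MovesAtMostOne σ := fun i =>
  ⟨apply_le_add_one_of_avoids hσ h3412 h321 i, by
    simpa [hσ i] using apply_le_add_one_of_avoids hσ h3412 h321 (σ i)⟩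

theorem av3412_of_movesAtMostOne (hσ : MovesAtMostOne σ) : Av3412 σ := by
  rintro ⟨i, j, k, l, hij, hjk, hkl, -, hli, -⟩
  rw [Fin.lt_def] at *
  have := hσ i; have := hσ l
  omega

theorem av321_of_movesAtMostOne (hσ : MovesAtMostOne σ) : Av321 σ := by
  rintro ⟨i, j, k, hij, hjk, hkj, hji⟩
  rw [Fin.lt_def] at *
  have := hσ i; have := hσ k
  omega

end Avoidance

def localInvolutions (n : ℕ) : Set (Fin n → Fin n) :=
  {f | Involutive f ∧ MovesAtMostOne f}

section LocalInvolutions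

variable {n : ℕ}

def extendFix (f : Fin n → Fin n) : Fin (n + 1) → Fin (n + 1) :=
  Fin.lastCases (Fin.last n) fun i => (f i).castSucc

def extendSwap (f : Fin n → Fin n) : Fin (n + 2) → Fin (n + 2) :=
  Fin.lastCases (Fin.last n).castSucc <|
    Fin.lastCases (Fin.last (n + 1)) fun i => (f i).castSucc.castSucc

@[simp] theorem extendFix_castSucc (f : Fin n → Fin n) (i : Fin n) :
    extendFix f i.castSucc = (f i).castSucc :=
  Fin.lastCases_castSucc _

@[simp] theorem extendFix_last (f : Fin n → Fin n) : extendFix f (Fin.last n) = Fin.last n :=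
  Fin.lastCases_last

@[simp] theorem extendSwap_castSucc_castSucc (f : Fin n → Fin n) (i : Fin n) :
    extendSwap f i.castSucc.castSucc = (f i).castSucc.castSucc := by
  simp [extendSwap]

@[simp] theorem extendSwap_castSucc_last (f : Fin n → Fin n) :
    extendSwap f (Fin.last n).castSucc = Fin.last (n + 1) := by
  simp [extendSwap]

@[simp] theorem extendSwap_last (f : Fin n → Fin n) :
    extendSwap f (Fin.last (n + 1)) = (Fin.last n).castSucc := by
  simp [extendSwap]

theorem extendFix_injective : Injective (extendFix (n := n)) := fun f g h =>
  funext fun i => Fin.castSucc_injective _ (by simpa using congrFun h i.castSucc)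

theorem extendSwap_injective : Injective (extendSwap (n := n)) := fun f g h =>
  funext fun i => Fin.castSucc_injective _ <| Fin.castSucc_injective _ <| by
    simpa using congrFun h i.castSucc.castSucc

theorem extendFix_ne_extendSwap (f : Fin (n + 1) → Fin (n + 1)) (g : Fin n → Fin n) :
    extendFix f ≠ extendSwap g := fun h => by
  simpa [Fin.ext_iff] using congrFun h (Fin.last (n + 1))

theorem extendFix_mem_localInvolutions_iff {f : Fin n → Fin n} :
    extendFix f ∈ localInvolutions (n + 1) ↔ f ∈ localInvolutions n := by
  simp [localInvolutions, Involutive, MovesAtMostOne, Fin.forall_fin_succ']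

theorem extendSwap_mem_localInvolutions_iff {f : Fin n → Fin n} :
    extendSwap f ∈ localInvolutions (n + 2) ↔ f ∈ localInvolutions n := by
  simp [localInvolutions, Involutive, MovesAtMostOne, Fin.forall_fin_succ', Nat.le_add_right_of_le]

theorem exists_extendFix_eq {g : Fin (n + 1) → Fin (n + 1)} (hlast : g (Fin.last n) = Fin.last n)
    (hg : ∀ i : Fin n, g i.castSucc ≠ Fin.last n) : ∃ f, extendFix f = g :=
  ⟨fun i => (g i.castSucc).castPred (hg i), funext <| Fin.lastCases (by simp [hlast]) (by simp)⟩

theorem exists_extendSwap_eq {g : Fin (n + 2) → Fin (n + 2)}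
    (hlast : g (Fin.last (n + 1)) = (Fin.last n).castSucc)
    (hprev : g (Fin.last n).castSucc = Fin.last (n + 1))
    (hg : ∀ i : Fin n, (g i.castSucc.castSucc : ℕ) < n) : ∃ f, extendSwap f = g :=
  ⟨fun i => ⟨g i.castSucc.castSucc, hg i⟩,
    funext <| Fin.lastCases (by simp [hlast]) <| Fin.lastCases (by simp [hprev])
      (fun i => by ext; simp)⟩

theorem localInvolutions_add_two (n : ℕ) :
    localInvolutions (n + 2) =
      extendFix '' localInvolutions (n + 1) ∪ extendSwap '' localInvolutions n := by
  ext g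
  constructor
  · intro hg
    have ⟨hinv, hmove⟩ := hg
    have hlast : g (Fin.last (n + 1)) = Fin.last (n + 1) ∨
        g (Fin.last (n + 1)) = (Fin.last n).castSucc := by
      have hge := (hmove (Fin.last (n + 1))).2
      have hlt := (g (Fin.last (n + 1))).isLt
      simp only [Fin.ext_iff, Fin.val_last, Fin.val_castSucc] at hge ⊢
      omega
    rcases hlast with hfix | hswap
    · obtain ⟨f, rfl⟩ := exists_extendFix_eq hfix fun i => by
        rw [← hfix]; exact hinv.injective.ne (Fin.castSucc_ne_last i)
      exact Or.inl ⟨f, extendFix_mem_localInvolutions_iff.1 hg, rfl⟩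
    · have hprev : g (Fin.last n).castSucc = Fin.last (n + 1) := by rw [← hswap, hinv]
      obtain ⟨f, rfl⟩ := exists_extendSwap_eq hswap hprev fun i => by
        have h1 := hinv.injective.ne (Fin.castSucc_ne_last i.castSucc)
        have h2 := hinv.injective.ne ((Fin.castSucc_injective _).ne (Fin.castSucc_ne_last i))
        rw [hswap] at h1
        rw [hprev] at h2
        have := (g i.castSucc.castSucc).isLt
        simp only [ne_eq, Fin.ext_iff, Fin.val_last, Fin.val_castSucc] at h1 h2
        omega
      exact Or.inr ⟨f, extendSwap_mem_localInvolutions_iff.1 hg, rfl⟩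
  · rintro (⟨f, hf, rfl⟩ | ⟨f, hf, rfl⟩)
    exacts [extendFix_mem_localInvolutions_iff.2 hf, extendSwap_mem_localInvolutions_iff.2 hf]

theorem ncard_localInvolutions_add_two (n : ℕ) :
    (localInvolutions (n + 2)).ncard =
      (localInvolutions (n + 1)).ncard + (localInvolutions n).ncard := by
  have hdisj :
      Disjoint (extendFix '' localInvolutions (n + 1)) (extendSwap '' localInvolutions n) :=
    Set.disjoint_left.2 <| by
      rintro _ ⟨f, -, rfl⟩ ⟨g, -, h⟩
      exact extendFix_ne_extendSwap f g h.symm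
  rw [localInvolutions_add_two, Set.ncard_union_eq hdisj,
    Set.ncard_image_of_injective _ extendFix_injective,
    Set.ncard_image_of_injective _ extendSwap_injective]

theorem ncard_localInvolutions_of_le_one (hn : n ≤ 1) : (localInvolutions n).ncard = 1 := by
  have := Fin.subsingleton_iff_le_one.2 hn
  exact Set.ncard_eq_one.2 ⟨id, Set.eq_singleton_iff_unique_mem.2
    ⟨⟨fun _ => rfl, fun i => by simp⟩, fun f _ => Subsingleton.elim f id⟩⟩

theorem ncard_localInvolutions : ∀ n, (localInvolutions n).ncard = Nat.fib (n + 1)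
  | 0 => ncard_localInvolutions_of_le_one zero_le_one
  | 1 => ncard_localInvolutions_of_le_one le_rfl
  | n + 2 => by
    rw [ncard_localInvolutions_add_two, ncard_localInvolutions n, ncard_localInvolutions (n + 1),
      Nat.fib_add_two (n := n + 1), add_comm]

end LocalInvolutions

theorem Equiv.Perm.mul_self_eq_one_iff_involutive {α : Type*} {σ : Equiv.Perm α} :
    σ * σ = 1 ↔ Involutive σ := by
  simp [Equiv.Perm.ext_iff, Involutive]

theorem image_coe_involutions_avoiding_3412_321 (n : ℕ) :
    DFunLike.coe '' {τ : Equiv.Perm (Fin n) | τ * τ = 1 ∧ Av3412 τ ∧ Av321 τ} =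
      localInvolutions n := by
  ext f
  constructor
  · rintro ⟨τ, ⟨hsq, h3412, h321⟩, rfl⟩
    have hτ := Equiv.Perm.mul_self_eq_one_iff_involutive.1 hsq
    exact ⟨hτ, movesAtMostOne_of_avoids hτ h3412 h321⟩
  · rintro ⟨hinv, hmove⟩
    have hmove' : MovesAtMostOne (hinv.toPerm f) := hmove
    exact ⟨hinv.toPerm f, ⟨Equiv.Perm.mul_self_eq_one_iff_involutive.2 hinv,
      av3412_of_movesAtMostOne hmove', av321_of_movesAtMostOne hmove'⟩, hinv.coe_toPerm⟩

theorem card_involutions_avoiding_3412_321 (n : ℕ) :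
    Nat.card {τ : Equiv.Perm (Fin n) // τ * τ = 1 ∧ Av3412 τ ∧ Av321 τ} =
      Nat.fib (n + 1) := by
  rw [← ncard_localInvolutions, ← image_coe_involutions_avoiding_3412_321,
    Set.ncard_image_of_injective _ DFunLike.coe_injective]
  exact Nat.card_coe_set_eq _
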